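/- arXiv:1212.3849 — 3 statements merged into one kernel-verified Lean document; each statement's English description precedes it below -/
import Mathlib

section
/- Let P : F_p^n → ℝ/ℤ be a non-classical polynomial of degree d and rank ≥ r, with r > p + 1. Let A be a hyperplane (affine subspace of codimension 1) in F_p^n and P' the restriction of P to A. Then P' is a polynomial of degree d and rank ≥ r − p, unless d = 1 and P is constant on A. -/
open scoped BigOperators

noncomputable section

/-- The circle group `𝕋 = ℝ/ℤ`. -/
abbrev 𝕋 : Type := AddCircle (1 : ℝ)

/-- The character `e(x) = e^{2πix}` on `𝕋`, valued in `ℂ`. -/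
def ee (x : 𝕋) : ℂ := (AddCircle.toCircle x : ℂ)

/-- The average `E_{x ∈ α}[f(x)]` of a complex-valued function on a finite type. -/
def cavg {α : Type*} [Fintype α] (f : α → ℂ) : ℂ := (∑ x, f x) / (Fintype.card α : ℂ)

/-- The average of a real-valued function on a finite type. -/
def ravg {α : Type*} [Fintype α] (f : α → ℝ) : ℝ := (∑ x, f x) / (Fintype.card α : ℝ)

/-- Multiplicative derivative `Δ_h f (x) = f(x+h) conj (f x)`. -/
def mDeriv {G : Type*} [Add G] (h : G) (f : G → ℂ) : G → ℂ :=
  fun x => f (x + h) * (starRingEnd ℂ) (f x)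

/-- `E_{h_1,…,h_d,x}[(Δ_{h_1} ⋯ Δ_{h_d} f)(x)]`. -/
def gowersAvg {G : Type*} [AddCommGroup G] [Fintype G] : ℕ → (G → ℂ) → ℂ
  | 0, f => cavg f
  | d + 1, f => cavg fun h => gowersAvg d (mDeriv h f)

/-- The Gowers norm `‖f‖_{U^d} = |E_{h_1,…,h_d,x}[(Δ_{h_1} ⋯ Δ_{h_d} f)(x)]|^{1/2^d}`. -/
def gowersNorm {G : Type*} [AddCommGroup G] [Fintype G] (d : ℕ) (f : G → ℂ) : ℝ :=
  (‖gowersAvg d f‖) ^ ((1 : ℝ) / 2 ^ d)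

/-- Additive derivative `D_h P (x) = P(x+h) - P(x)`. -/
def aDeriv {G M : Type*} [Add G] [Sub M] (h : G) (P : G → M) : G → M :=
  fun x => P (x + h) - P x

/-- Iterated additive derivative `D_{h_1} ⋯ D_{h_k} P`. -/
def iterADeriv {G M : Type*} [AddCommGroup G] [AddCommGroup M] :
    {k : ℕ} → (Fin k → G) → (G → M) → (G → M)
  | 0, _, P => P
  | _ + 1, h, P => aDeriv (h 0) (iterADeriv (Fin.tail h) P)

/-- `P` is a (non-classical) polynomial of degree ≤ `d`:
all `(d+1)`-fold additive derivatives vanish identically. -/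
def IsPolyDeg {G M : Type*} [AddCommGroup G] [AddCommGroup M] (d : ℕ) (P : G → M) : Prop :=
  ∀ (h : Fin (d + 1) → G) (x : G), iterADeriv h P x = 0

/-- `P` has degree exactly `d`. -/
def ExactDeg {G M : Type*} [AddCommGroup G] [AddCommGroup M] (d : ℕ) (P : G → M) : Prop :=
  IsPolyDeg d P ∧ ∀ d' < d, ¬ IsPolyDeg d' P

/-- The degree of a polynomial: the least `d` with `IsPolyDeg d P`. -/
def polyDeg {G M : Type*} [AddCommGroup G] [AddCommGroup M] (P : G → M) : ℕ :=
  sInf {d | IsPolyDeg d P}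

/-- `P` has `d`-rank at most `r`: `P = Γ(Q_1,…,Q_r)` with the `Q_i` of degree ≤ `d-1`. -/
def HasRankLE {G : Type*} [AddCommGroup G] (d : ℕ) (P : G → 𝕋) (r : ℕ) : Prop :=
  ∃ (Q : Fin r → G → 𝕋) (Γ : (Fin r → 𝕋) → 𝕋),
    (∀ i, IsPolyDeg (d - 1) (Q i)) ∧ ∀ x, P x = Γ fun i => Q i x

/-- The `d`-rank of `P`, in `ℕ∞` (`⊤` if no finite decomposition exists;
for `d = 1` this is `⊤` exactly when `P` is non-constant). -/
def rankd {G : Type*} [AddCommGroup G] (d : ℕ) (P : G → 𝕋) : ℕ∞ :=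
  sInf {r : ℕ∞ | ∃ m : ℕ, r = m ∧ HasRankLE d P m}

/-- `P` has depth exactly `k` (shift zero): values in `U_{k+1} = (1/p^{k+1})ℤ/ℤ` but not all
in `U_k`. -/
def ExactDepth {G : Type*} (p k : ℕ) (P : G → 𝕋) : Prop :=
  (∀ x, (p ^ (k + 1)) • P x = 0) ∧ ¬ (∀ x, (p ^ k) • P x = 0)

/-- Application of a linear form `L = (w_t)_t` to a tuple of points of `F_p^n`:
`(x_t)_t ↦ ∑_t w_t x_t`. -/
def formApply {p : ℕ} {ι : Type*} [Fintype ι] {n : ℕ} (L : ι → ZMod p)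
    (x : ι → Fin n → ZMod p) : Fin n → ZMod p := ∑ t, L t • x t

/-- The `(d,k)`-dependency set of a system of forms `L`: the tuples
`(λ_j) ∈ [0, p^{k+1}-1]^m` with `∑_j λ_j P(L_j(x)) ≡ 0` for every non-classical polynomial `P`
of degree `d` and depth `k` (over every `F_p^n`). -/
def DepSet (p k d : ℕ) {ι μ : Type*} [Fintype ι] [Fintype μ]
    (L : μ → ι → ZMod p) : Set (μ → ℕ) :=
  {lam | (∀ j, lam j < p ^ (k + 1)) ∧
    ∀ (n : ℕ) (P : (Fin n → ZMod p) → 𝕋), ExactDeg d P → ExactDepth p k P →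
      ∀ x : ι → Fin n → ZMod p, (∑ j, lam j • P (formApply (L j) x)) = 0}

/-- `b_1,…,b_m ∈ 𝕋^κ` are consistent with the forms `L` with respect to degree data `dd`
and depth data `kk`. -/
def ConsistentWith (p : ℕ) {ι κ : Type*} [Fintype ι] [Fintype κ] {m : ℕ}
    (L : Fin m → ι → ZMod p) (dd kk : κ → ℕ) (b : Fin m → κ → 𝕋) : Prop :=
  ∀ i : κ, (∀ j, (p ^ (kk i + 1)) • b j i = 0) ∧
    ∀ lam ∈ DepSet p (kk i) (dd i) L, (∑ j, lam j • b j i) = 0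

/-- The polynomial factor defined by `P_1,…,P_C` with depths `k_1,…,k_C` has rank greater
than `r`: every integer combination `∑ λ_i P_i`, with the `λ_i` not all divisible by the
respective `p^{k_i+1}`, has `D`-rank > `r` where `D = max_i deg(λ_i P_i)`. -/
def FactorRankGT (p : ℕ) {G : Type*} [AddCommGroup G] {C : ℕ}
    (P : Fin C → G → 𝕋) (k : Fin C → ℕ) (r : ℕ) : Prop :=
  ∀ lam : Fin C → ℤ, (∃ i, ¬ ((p : ℤ) ^ (k i + 1) ∣ lam i)) →
    (r : ℕ∞) < rankd (Finset.univ.sup fun i => polyDeg fun x => lam i • P i x)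
      (fun x => ∑ i, lam i • P i x)

/-- Cauchy–Schwarz complexity ≤ `d`: for each `i`, the remaining forms can be partitioned into
`d+1` classes, with `L_i` outside the linear span of each class. -/
def CSComplexityLE (p : ℕ) {m : ℕ} {ι : Type*} [Fintype ι] (d : ℕ)
    (L : Fin m → ι → ZMod p) : Prop :=
  ∀ i, ∃ c : Fin m → Fin (d + 1), ∀ t,
    L i ∉ Submodule.span (ZMod p) {v | ∃ j, j ≠ i ∧ c j = t ∧ v = L j}



/-!
Let `A = φ(F_p^n)` and choose a direction `v` transverse to `A`, so that every point is
`y = a + t • v` with `a ∈ A` and `t ∈ F_p` depending affinely on `y`. Telescoping along `v`,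
`P (a + t • v) = P a + ∑_{i < t} D_v P (a + i • v)`. For each `t ≠ 0` the sum is a polynomial of
degree `< d` in `y`, and so is `t / p ∈ 𝕋`, which tells which of these `p - 1` sums to pick.
Hence a decomposition of `P|_A` through `m` polynomials of degree `< d` gives one of `P` through
`m + p` of them: `rank P ≤ rank P|_A + p`. Applied to `P|_A` itself, this also shows that `P|_A`
cannot drop degree when `rank P > p + 1`.
-/

open Finset

section IsPolyDeg

variable {G G' M : Type*} [AddCommGroup G] [AddCommGroup G'] [AddCommGroup M]

theorem aDeriv_comm (a b : G) (P : G → M) :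
    aDeriv a (aDeriv b P) = aDeriv b (aDeriv a P) := by
  funext x
  simp only [aDeriv, add_right_comm x a b]
  abel

theorem iterADeriv_succ {k : ℕ} (h : Fin (k + 1) → G) (P : G → M) :
    iterADeriv h P = aDeriv (h 0) (iterADeriv (Fin.tail h) P) := rfl

theorem iterADeriv_aDeriv {k : ℕ} (h : Fin k → G) (v : G) (P : G → M) :
    iterADeriv h (aDeriv v P) = aDeriv v (iterADeriv h P) := by
  induction k with
  | zero => rfl
  | succ k ih => exact (congrArg (aDeriv (h 0)) (ih (Fin.tail h))).trans (aDeriv_comm _ _ _)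

theorem iterADeriv_add {k : ℕ} (h : Fin k → G) (P Q : G → M) :
    iterADeriv h (P + Q) = iterADeriv h P + iterADeriv h Q := by
  induction k with
  | zero => rfl
  | succ k ih =>
    funext x
    simp only [iterADeriv, aDeriv, ih (Fin.tail h), Pi.add_apply]
    abel

theorem iterADeriv_comp_of_map_add {k : ℕ} (h : Fin k → G') (P : G → M) (τ : G' → G)
    (T : G' → G) (hτ : ∀ x y, τ (x + y) = τ x + T y) :
    iterADeriv h (fun x => P (τ x)) = fun x => iterADeriv (fun i => T (h i)) P (τ x) := by
  induction k with
  | zero => rfl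
  | succ k ih =>
    funext x
    simp only [iterADeriv, aDeriv, ih (Fin.tail h), hτ]
    rfl

theorem IsPolyDeg.succ {d : ℕ} {P : G → M} (hP : IsPolyDeg d P) : IsPolyDeg (d + 1) P := by
  intro h x
  rw [iterADeriv_succ, show iterADeriv (Fin.tail h) P = 0 from funext (hP (Fin.tail h))]
  exact sub_self 0

theorem IsPolyDeg.mono {d d' : ℕ} (hd : d ≤ d') {P : G → M} (hP : IsPolyDeg d P) :
    IsPolyDeg d' P := by
  induction d', hd using Nat.le_induction with
  | base => exact hP
  | succ _ _ ih => exact ih.succ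

theorem IsPolyDeg.aDeriv {d : ℕ} {P : G → M} (hP : IsPolyDeg (d + 1) P) (v : G) :
    IsPolyDeg d (aDeriv v P) := by
  intro h x
  rw [iterADeriv_aDeriv]
  simpa [iterADeriv] using hP (Fin.cons v h) x

theorem IsPolyDeg.comp_of_map_add {d : ℕ} {P : G → M} (hP : IsPolyDeg d P) (τ : G' → G)
    (T : G' → G) (hτ : ∀ x y, τ (x + y) = τ x + T y) : IsPolyDeg d (fun x => P (τ x)) := by
  intro h x
  rw [iterADeriv_comp_of_map_add h P τ T hτ]
  exact hP _ _

theorem IsPolyDeg.add {d : ℕ} {P Q : G → M} (hP : IsPolyDeg d P) (hQ : IsPolyDeg d Q) :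
    IsPolyDeg d (P + Q) := by
  intro h x
  simp [iterADeriv_add, hP h x, hQ h x]

theorem isPolyDeg_zero_fun (d : ℕ) : IsPolyDeg d (0 : G → M) :=
  IsPolyDeg.mono (Nat.zero_le d) fun _ _ => sub_self 0

theorem IsPolyDeg.finset_sum {d : ℕ} {ι : Type*} (s : Finset ι) (f : ι → G → M)
    (hf : ∀ i ∈ s, IsPolyDeg d (f i)) : IsPolyDeg d (fun x => ∑ i ∈ s, f i x) := by
  simp only [← Finset.sum_apply]
  exact Finset.sum_induction f (IsPolyDeg d) (fun _ _ => IsPolyDeg.add) (isPolyDeg_zero_fun d) hf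

theorem IsPolyDeg.apply_eq {P : G → M} (hP : IsPolyDeg 0 P) (x y : G) : P x = P y := by
  have : P (y + (x - y)) - P y = 0 := hP (fun _ => x - y) y
  rwa [add_sub_cancel, sub_eq_zero] at this

theorem isPolyDeg_one_of_map_add {f : G → M} (κ : G → M) (hf : ∀ x y, f (x + y) = f x + κ y) :
    IsPolyDeg 1 f := by
  intro h x
  show f (x + h 0 + h 1) - f (x + h 0) - (f (x + h 1) - f x) = 0
  rw [hf (x + h 0), hf x (h 0), hf x (h 1)]
  abel

theorem sum_range_aDeriv (P : G → M) (a v : G) (k : ℕ) :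
    P (a + k • v) = P a + ∑ i ∈ range k, aDeriv v P (a + i • v) := by
  refine eq_add_of_sub_eq' ?_
  simpa [aDeriv, succ_nsmul, add_assoc] using (sum_range_sub (fun i => P (a + i • v)) k).symm

end IsPolyDeg

section Rank

variable {G : Type*} [AddCommGroup G] {d : ℕ}

theorem hasRankLE_card {ι : Type*} [Fintype ι] {P : G → 𝕋} (Q : ι → G → 𝕋)
    (hQ : ∀ i, IsPolyDeg (d - 1) (Q i)) (Γ : (ι → 𝕋) → 𝕋) (hP : ∀ x, P x = Γ fun i => Q i x) :
    HasRankLE d P (Fintype.card ι) := by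
  let e := Fintype.equivFin ι
  exact ⟨fun j => Q (e.symm j), fun q => Γ fun i => q (e i), fun j => hQ _,
    fun x => by simp [hP x]⟩

theorem HasRankLE.add {P P' : G → 𝕋} {m k : ℕ} (hP : HasRankLE d P m) (hP_succ : HasRankLE d P' k) :
    HasRankLE d (P + P') (m + k) := by
  obtain ⟨Q, Γ, hQ, hΓ⟩ := hP
  obtain ⟨Q', Γ', hQ', hΓ'⟩ := hP_succ
  simpa using hasRankLE_card (Sum.elim Q Q') (Sum.rec hQ hQ')
    (fun q => Γ (fun i => q (.inl i)) + Γ' (fun i => q (.inr i))) (by simp [hΓ, hΓ'])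

theorem HasRankLE.comp_of_map_add {G' : Type*} [AddCommGroup G'] {P : G → 𝕋} {m : ℕ}
    (hP : HasRankLE d P m) (τ : G' → G) (T : G' → G) (hτ : ∀ x y, τ (x + y) = τ x + T y) :
    HasRankLE d (fun x => P (τ x)) m := by
  obtain ⟨Q, Γ, hQ, hΓ⟩ := hP
  exact ⟨fun i x => Q i (τ x), Γ, fun i => (hQ i).comp_of_map_add τ T hτ, fun x => hΓ (τ x)⟩

theorem IsPolyDeg.hasRankLE_zero {P : G → 𝕋} (hP : IsPolyDeg 0 P) : HasRankLE d P 0 :=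
  ⟨finZeroElim, fun _ => P 0, finZeroElim, fun x => hP.apply_eq x 0⟩

theorem IsPolyDeg.hasRankLE_one {P : G → 𝕋} (hP : IsPolyDeg (d - 1) P) : HasRankLE d P 1 :=
  ⟨fun _ => P, fun q => q 0, fun _ => hP, fun _ => rfl⟩

theorem HasRankLE.apply_eq_of_one {P : G → 𝕋} {m : ℕ} (hP : HasRankLE 1 P m) (x y : G) :
    P x = P y := by
  obtain ⟨Q, Γ, hQ, hΓ⟩ := hP
  simp only [hΓ, fun i => (hQ i).apply_eq x y]

theorem rankd_le {P : G → 𝕋} {m : ℕ} (hP : HasRankLE d P m) : rankd d P ≤ m :=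
  sInf_le ⟨m, rfl, hP⟩

theorem le_rankd {P : G → 𝕋} {k : ℕ∞} (hk : ∀ m : ℕ, HasRankLE d P m → k ≤ m) : k ≤ rankd d P :=
  le_sInf fun _ ⟨m, hm, hP⟩ => hm ▸ hk m hP

/-- The slot of `R 0 = 0` is taken by `τ`, which selects the summand: hence `p` polynomials,
not `p + 1`. -/
theorem hasRankLE_select {p : ℕ} [NeZero p] (τ : G → ZMod p) (R : ZMod p → G → 𝕋)
    (hR0 : ∀ y, R 0 y = 0) (hτ : IsPolyDeg (d - 1) fun y => ZMod.toAddCircle (τ y))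
    (hR : ∀ t, IsPolyDeg (d - 1) (R t)) : HasRankLE d (fun y => R (τ y) y) p := by
  obtain ⟨dec, hdec⟩ := (ZMod.toAddCircle_injective p).hasLeftInverse
  have hdec0 : dec 0 = 0 := by simpa using hdec 0
  have := hasRankLE_card (d := d) (P := fun y => R (τ y) y)
    (fun t => if t = 0 then fun y => ZMod.toAddCircle (τ y) else R t)
    (fun t => by split_ifs; exacts [hτ, hR t])
    (fun q => if dec (q 0) = 0 then 0 else q (dec (q 0)))
    (fun y => by
      by_cases h : τ y = 0
      · simp [h, hdec0, hR0]
      · simp [h, hdec (τ y)])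
  rwa [ZMod.card] at this

end Rank

theorem exists_linearMap_add_smul_eq {K V W : Type*} [Field K] [AddCommGroup V] [Module K V]
    [AddCommGroup W] [Module K W] [FiniteDimensional K W] (L : V →ₗ[K] W)
    (hL : Function.Injective L) (hdim : Module.finrank K W = Module.finrank K V + 1) :
    ∃ (g : W →ₗ[K] V) (ℓ : W →ₗ[K] K) (v : W), ∀ w, L (g w) + ℓ w • v = w := by
  have : FiniteDimensional K V := FiniteDimensional.of_injective L hL
  have hquot : Module.finrank K (W ⧸ LinearMap.range L) = Module.finrank K K := by
    have := (LinearMap.range L).finrank_quotient_add_finrank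
    rw [LinearMap.finrank_range_of_inj hL] at this
    rw [Module.finrank_self]
    omega
  obtain ⟨e⟩ := FiniteDimensional.nonempty_linearEquiv_of_finrank_eq hquot
  let ℓ := e.toLinearMap ∘ₗ (LinearMap.range L).mkQ
  obtain ⟨v, hv⟩ : ∃ v, ℓ v = 1 :=
    (e.surjective.comp (LinearMap.range L).mkQ_surjective) 1
  obtain ⟨g, hg⟩ := L.exists_leftInverse_of_injective (LinearMap.ker_eq_bot.mpr hL)
  refine ⟨g ∘ₗ (LinearMap.id - ℓ.smulRight v), ℓ, v, fun w => ?_⟩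
  obtain ⟨a, ha⟩ : w - ℓ w • v ∈ LinearMap.range L := by
    rw [← Submodule.Quotient.mk_eq_zero, ← Submodule.mkQ_apply, ← e.map_eq_zero_iff]
    change ℓ (w - ℓ w • v) = 0
    simp [hv]
  have hga : g (L a) = a := LinearMap.congr_fun hg a
  change L (g (w - ℓ w • v)) + ℓ w • v = w
  rw [← ha, hga, ha, sub_add_cancel]

theorem AffineMap.map_add_eq_add_linear {k V W : Type*} [Ring k] [AddCommGroup V] [Module k V]
    [AddCommGroup W] [Module k W] (φ : V →ᵃ[k] W) (x u : V) : φ (x + u) = φ x + φ.linear u := by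
  simpa [add_comm] using φ.map_vadd x u

theorem HasRankLE.of_comp_hyperplane {p : ℕ} [Fact p.Prime] {V W : Type*} [AddCommGroup V]
    [Module (ZMod p) V] [AddCommGroup W] [Module (ZMod p) W] [FiniteDimensional (ZMod p) W]
    (hdim : Module.finrank (ZMod p) W = Module.finrank (ZMod p) V + 1) {d m : ℕ} (hd : 2 ≤ d)
    {P : W → 𝕋} (hP : IsPolyDeg d P) {φ : V →ᵃ[ZMod p] W} (hφ : Function.Injective φ)
    (h : HasRankLE d (fun x => P (φ x)) m) : HasRankLE d P (m + p) := by
  obtain ⟨g, ℓ, v, hgℓ⟩ :=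
    exists_linearMap_add_smul_eq φ.linear (φ.linear_injective_iff.mpr hφ) hdim
  let σ : W → V := fun y => g (y - φ 0)
  let τ : W → ZMod p := fun y => ℓ (y - φ 0)
  have hσ : ∀ y u, σ (y + u) = σ y + g u := fun y u => by simp [σ, add_sub_right_comm]
  have hτ : ∀ y u, τ (y + u) = τ y + ℓ u := fun y u => by simp [τ, add_sub_right_comm]
  have hστ : ∀ y, φ (σ y) + (τ y).val • v = y := fun y => by
    rw [← Nat.cast_smul_eq_nsmul (ZMod p), ZMod.natCast_zmod_val]
    calc φ (σ y) + τ y • v = φ 0 + (φ.linear (g (y - φ 0)) + ℓ (y - φ 0) • v) := by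
          rw [← add_assoc, ← φ.map_add_eq_add_linear, zero_add]
      _ = y := by rw [hgℓ, add_sub_cancel]
  let R : ZMod p → W → 𝕋 := fun t y => ∑ i ∈ range t.val, aDeriv v P (φ (σ y) + i • v)
  have hsplit : P = (fun y => P (φ (σ y))) + fun y => R (τ y) y := funext fun y => by
    conv_lhs => rw [← hστ y]
    exact sum_range_aDeriv P _ v _
  have hP_succ : IsPolyDeg (d - 1 + 1) P := by rwa [Nat.sub_add_cancel (by omega)]
  rw [hsplit]
  refine (h.comp_of_map_add σ g hσ).add (hasRankLE_select τ R (fun y => by simp [R]) ?_ ?_)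
  · refine (isPolyDeg_one_of_map_add (fun u => ZMod.toAddCircle (ℓ u)) ?_).mono (by omega)
    intro y u
    rw [hτ, map_add]
  · refine fun t => IsPolyDeg.finset_sum _ _ fun i _ => ?_
    refine (hP_succ.aDeriv v).comp_of_map_add (fun y => φ (σ y) + i • v) (fun u => φ.linear (g u))
      fun y u => ?_
    simp only [hσ, φ.map_add_eq_add_linear]
    abel

/-- If `P` has degree `d` and rank ≥ `r > p+1`, and `A` is a hyperplane
(here parametrized by an injective affine map `φ : F_p^n → F_p^{n+1}`), then the restriction
`P' = P ∘ φ` has degree `d` and rank ≥ `r - p`, unless `d = 1` and `P` is constant on `A`. -/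
theorem rank_restrict_hyperplane (p : ℕ) [Fact p.Prime] (n d r : ℕ) (hr : p + 1 < r)
    (P : (Fin (n + 1) → ZMod p) → 𝕋) (hdeg : ExactDeg d P)
    (hrank : (r : ℕ∞) ≤ rankd d P)
    (φ : (Fin n → ZMod p) →ᵃ[ZMod p] (Fin (n + 1) → ZMod p))
    (hφ : Function.Injective φ) :
    (d = 1 ∧ ∀ x y, P (φ x) = P (φ y)) ∨
      (ExactDeg d (fun x => P (φ x)) ∧ ((r - p : ℕ) : ℕ∞) ≤ rankd d (fun x => P (φ x))) := by
  have hPφ : IsPolyDeg d fun x => P (φ x) :=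
    hdeg.1.comp_of_map_add φ φ.linear φ.map_add_eq_add_linear
  have hbound : ∀ m, 2 ≤ d → HasRankLE d (fun x => P (φ x)) m → r ≤ m + p := fun m hd h =>
    Nat.cast_le.mp <| hrank.trans <| rankd_le <|
      h.of_comp_hyperplane (by simp) hd hdeg.1 hφ
  obtain rfl | rfl | hd := show d = 0 ∨ d = 1 ∨ 2 ≤ d by omega
  · have := hrank.trans (rankd_le hdeg.1.hasRankLE_zero)
    norm_cast at this
    omega
  · by_cases hconst : ∀ x y, P (φ x) = P (φ y)
    · exact Or.inl ⟨rfl, hconst⟩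
    · refine Or.inr ⟨⟨hPφ, fun d' hd' h => hconst ?_⟩, le_rankd fun m h => ?_⟩
      · exact (h.mono (by omega : d' ≤ 0)).apply_eq
      · exact absurd h.apply_eq_of_one hconst
  · refine Or.inr ⟨⟨hPφ, fun d' hd' h => ?_⟩, le_rankd fun m h => ?_⟩
    · have := hbound 1 hd (h.mono (by omega)).hasRankLE_one
      omega
    · have := hbound m hd h
      exact Nat.cast_le.mpr (by omega)
end
end

section
/- (Counting lemma.) Let f_1,...,f_m : F_p^n → [−1,1], and let L = {L_1,...,L_m} be a system of m linear forms in ℓ variables of Cauchy–Schwarz complexity d. Then |E_{x_1,...,x_ℓ ∈ F_p^n}[∏_{i=1}^m f_i(L_i(x_1,...,x_ℓ))]| ≤ min_{i ∈ [m]} ‖f_i‖_{U^{d+1}}. -/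
open scoped BigOperators

noncomputable section

/-!
Fix `i` and a partition `c` of the other forms into `d + 1` classes as in the definition of
Cauchy–Schwarz complexity. Since `L i` is not in the span of class `t`, there is a vector `v t`
with `L i ⬝ᵥ v t = 1` and `L j ⬝ᵥ v t = 0` for `j` in class `t`. Averaging over the shifts
`x ↦ x + ∑ₜ yₜ v t` writes the average as `E_{x,y} g(x, y) ∏ₜ Bₜ(x, y)` with
`g(x, y) = f_i(L_i x + ∑ₜ yₜ)`, `|Bₜ| ≤ 1` and `Bₜ` independent of `yₜ`. Applying the
Cauchy–Schwarz inequality once in each variable `yₜ` removes the `Bₜ` and bounds the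
`2^{d+1}`-th power of the average by the cube average of `g` in `y`, which is
`‖f_i‖_{U^{d+1}}^{2^{d+1}}`.
-/

open Finset

universe u

section Expect

variable {ι M : Type*} [Fintype ι] [AddCommMonoid M] [Module ℚ≥0 M]

theorem expect_prod_type {κ : Type*} [Fintype κ] (F : ι × κ → M) :
    𝔼 q, F q = 𝔼 a, 𝔼 b, F (a, b) := by
  rw [← expect_product, univ_product_univ]

theorem expect_pi_fin_succ {s : ℕ} (F : (Fin (s + 1) → ι) → M) :
    𝔼 y, F y = 𝔼 a, 𝔼 y, F (Fin.cons a y) := by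
  rw [← expect_product', univ_product_univ]
  exact Fintype.expect_equiv (Fin.consEquiv fun _ => ι).symm _ _ fun y => by simp

theorem prod_pi_fin_succ {N : Type*} [CommMonoid N] {s : ℕ} (F : (Fin (s + 1) → ι) → N) :
    ∏ y, F y = ∏ a, ∏ y, F (Fin.cons a y) :=
  calc ∏ y, F y = ∏ q : ι × (Fin s → ι), F (Fin.cons q.1 q.2) :=
        (Fintype.prod_equiv (Fin.consEquiv fun _ => ι) _ _ fun _ => rfl).symm
    _ = _ := Fintype.prod_prod_type _

end Expect

section Translate

variable {G M : Type*} [AddCommGroup G] [Fintype G] [AddCommMonoid M] [Module ℚ≥0 M]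

theorem expect_add_right (F : G → M) (c : G) : 𝔼 x, F (x + c) = 𝔼 x, F x :=
  Fintype.expect_equiv (Equiv.addRight c) _ _ fun _ => rfl

theorem expect_add_sum {s : ℕ} (F : G → M) (c : G) :
    𝔼 y : Fin (s + 1) → G, F (c + ∑ t, y t) = 𝔼 z, F z := by
  rw [expect_pi_fin_succ, expect_comm]
  simp_rw [Fin.sum_cons, add_left_comm c, expect_add_right]
  exact Fintype.expect_const _

theorem expect_eq_expect_expect_add {B : Type*} [Fintype B] [Nonempty B] (F : G → M)
    (V : B → G) : 𝔼 x, F x = 𝔼 x, 𝔼 y, F (x + V y) := by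
  rw [expect_comm]
  simp_rw [expect_add_right]
  rw [Fintype.expect_const]

theorem sq_expect_eq_expect_mul_add (F : G → ℝ) :
    (𝔼 a, F a) ^ 2 = 𝔼 a, 𝔼 h, F a * F (a + h) := by
  rw [sq, Fintype.expect_mul_expect]
  exact expect_congr rfl fun a _ =>
    (Fintype.expect_equiv (Equiv.addLeft a) _ _ fun _ => rfl).symm

end Translate

theorem sq_expect_mul_le_expect_sq {ι : Type*} [Fintype ι] (f B : ι → ℝ)
    (hB : ∀ i, |B i| ≤ 1) : (𝔼 i, f i * B i) ^ 2 ≤ 𝔼 i, f i ^ 2 := by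
  rcases isEmpty_or_nonempty ι with hι | hι
  · simp [univ_eq_empty]
  have hB2 : 𝔼 i, B i ^ 2 ≤ 1 :=
    expect_le univ_nonempty fun i _ => by nlinarith [abs_le.mp (hB i), sq_abs (B i)]
  calc (𝔼 i, f i * B i) ^ 2 ≤ (𝔼 i, f i ^ 2) * 𝔼 i, B i ^ 2 := expect_mul_sq_le_sq_mul_sq _ _ _
    _ ≤ 𝔼 i, f i ^ 2 := mul_le_of_le_one_right (expect_nonneg fun i _ => sq_nonneg _) hB2

theorem sq_expect_expect_mul_le {ι κ : Type*} [Fintype ι] [Fintype κ] (f B : ι → κ → ℝ)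
    (hB : ∀ i j, |B i j| ≤ 1) : (𝔼 i, 𝔼 j, f i j * B i j) ^ 2 ≤ 𝔼 i, 𝔼 j, f i j ^ 2 :=
  calc (𝔼 i, 𝔼 j, f i j * B i j) ^ 2 ≤ 𝔼 i, (𝔼 j, f i j * B i j) ^ 2 := by
        simpa using sq_expect_mul_le_expect_sq (fun i => 𝔼 j, f i j * B i j) 1 (by simp)
    _ ≤ 𝔼 i, 𝔼 j, f i j ^ 2 :=
        expect_le_expect fun i _ => sq_expect_mul_le_expect_sq _ _ (hB i)

def cubeVertex {G : Type*} [Zero G] {s : ℕ} (ω : Fin s → Bool) (h : Fin s → G) : Fin s → G :=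
  fun t => if ω t then h t else 0

theorem cubeVertex_cons {G : Type*} [Zero G] {s : ℕ} (b : Bool) (ω : Fin s → Bool) (a : G)
    (h : Fin s → G) :
    cubeVertex (Fin.cons b ω) (Fin.cons a h) = Fin.cons (if b then a else 0) (cubeVertex ω h) := by
  ext t
  refine Fin.cases ?_ (fun t => ?_) t <;> simp [cubeVertex]

theorem Fin.cons_add_cons {G : Type*} [Add G] {s : ℕ} (a b : G) (y z : Fin s → G) :
    (Fin.cons a y : Fin (s + 1) → G) + Fin.cons b z = Fin.cons (a + b) (y + z) := by
  ext t
  refine Fin.cases ?_ (fun t => ?_) t <;> simp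

theorem expect_cube_succ {G : Type*} [AddCommGroup G] [Fintype G] {s : ℕ}
    (g : (Fin (s + 1) → G) → ℝ) :
    𝔼 y, 𝔼 h, ∏ ω : Fin (s + 1) → Bool, g (y + cubeVertex ω h)
      = 𝔼 a, 𝔼 b, 𝔼 y, 𝔼 h, ∏ ω : Fin s → Bool,
          g (Fin.cons a (y + cubeVertex ω h)) * g (Fin.cons (a + b) (y + cubeVertex ω h)) := by
  simp_rw [expect_pi_fin_succ, prod_pi_fin_succ, Fintype.prod_bool, cubeVertex_cons,
    Fin.cons_add_cons, if_true, Bool.false_eq_true, if_false, add_zero]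
  refine expect_congr rfl fun a _ => ?_
  rw [expect_comm]
  refine expect_congr rfl fun b _ => expect_congr rfl fun y _ => expect_congr rfl fun h _ => ?_
  rw [← prod_mul_distrib]
  exact prod_congr rfl fun ω _ => mul_comm _ _

theorem sq_expect_mul_prod_le {G X : Type*} [AddCommGroup G] [Fintype G] [Fintype X] {s : ℕ}
    (g : X → (Fin (s + 1) → G) → ℝ) (B : Fin (s + 1) → X → (Fin (s + 1) → G) → ℝ)
    (hB₀ : ∀ x y, |B 0 x y| ≤ 1) (hB₀_update : ∀ x y a, B 0 x (Function.update y 0 a) = B 0 x y) :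
    (𝔼 x, 𝔼 y, g x y * ∏ t, B t x y) ^ 2
      ≤ 𝔼 q : X × G × G, 𝔼 y,
          g q.1 (Fin.cons q.2.1 y) * g q.1 (Fin.cons (q.2.1 + q.2.2) y) * ∏ t : Fin s,
            B t.succ q.1 (Fin.cons q.2.1 y) * B t.succ q.1 (Fin.cons (q.2.1 + q.2.2) y) := by
  -- Cauchy–Schwarz in `y 0`, which `B 0` does not see; the square of the inner `y 0`-average
  -- is then an average over the pairs `(a, a + b)`.
  set K : X → (Fin s → G) → G → ℝ :=
    fun x y a => g x (Fin.cons a y) * ∏ t : Fin s, B t.succ x (Fin.cons a y)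
  have h_split : 𝔼 x, 𝔼 y, g x y * ∏ t, B t x y
      = 𝔼 x, 𝔼 y, (𝔼 a, K x y a) * B 0 x (Fin.cons 0 y) := by
    refine expect_congr rfl fun x _ => ?_
    rw [expect_pi_fin_succ, expect_comm]
    refine expect_congr rfl fun y _ => ?_
    rw [expect_mul]
    refine expect_congr rfl fun a _ => ?_
    rw [Fin.prod_univ_succ, ← hB₀_update x (Fin.cons a y) 0, Fin.update_cons_zero]
    ring
  rw [h_split]
  refine (sq_expect_expect_mul_le _ _ fun x y => hB₀ x _).trans_eq ?_
  simp_rw [sq_expect_eq_expect_mul_add, expect_prod_type]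
  refine expect_congr rfl fun x _ => ?_
  rw [expect_comm]
  refine expect_congr rfl fun a _ => ?_
  rw [expect_comm]
  refine expect_congr rfl fun b _ => expect_congr rfl fun y _ => ?_
  simp only [K, prod_mul_distrib]
  ring

theorem abs_expect_mul_prod_pow_le_cube {G : Type u} [AddCommGroup G] [Fintype G] {s : ℕ}
    {X : Type u} [Fintype X] (g : X → (Fin s → G) → ℝ) (B : Fin s → X → (Fin s → G) → ℝ)
    (hB : ∀ t x y, |B t x y| ≤ 1)
    (hB_update : ∀ t x y a, B t x (Function.update y t a) = B t x y) :
    |𝔼 x, 𝔼 y, g x y * ∏ t, B t x y| ^ 2 ^ s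
      ≤ |𝔼 x, 𝔼 y, 𝔼 h, ∏ ω : Fin s → Bool, g x (y + cubeVertex ω h)| := by
  induction s generalizing X with
  | zero =>
    have (y h : Fin 0 → G) : y + h = y := Subsingleton.elim _ _
    simp [this]
  | succ s ih =>
    have h_ih := ih (X := X × G × G)
      (fun q y => g q.1 (Fin.cons q.2.1 y) * g q.1 (Fin.cons (q.2.1 + q.2.2) y))
      (fun t q y => B t.succ q.1 (Fin.cons q.2.1 y) * B t.succ q.1 (Fin.cons (q.2.1 + q.2.2) y))
      (fun t q y => by
        rw [abs_mul]
        exact mul_le_one₀ (hB _ _ _) (abs_nonneg _) (hB _ _ _))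
      (fun t q y a => by simp only [Fin.cons_update, hB_update])
    calc |𝔼 x, 𝔼 y, g x y * ∏ t, B t x y| ^ 2 ^ (s + 1)
        = ((𝔼 x, 𝔼 y, g x y * ∏ t, B t x y) ^ 2) ^ 2 ^ s := by
          rw [pow_succ', pow_mul, sq_abs]
      _ ≤ _ := pow_le_pow_left₀ (sq_nonneg _)
          ((sq_expect_mul_prod_le g B (hB 0) (hB_update 0)).trans (le_abs_self _)) _
      _ ≤ _ := h_ih
      _ = _ := by simp_rw [expect_prod_type, expect_cube_succ]

theorem ravg_eq_expect {α : Type*} [Fintype α] (F : α → ℝ) : ravg F = 𝔼 a, F a :=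
  (Fintype.expect_eq_sum_div_card F).symm

theorem cavg_eq_expect {α : Type*} [Fintype α] (F : α → ℂ) : cavg F = 𝔼 a, F a :=
  (Fintype.expect_eq_sum_div_card F).symm

theorem mDeriv_ofReal {G : Type*} [Add G] (h : G) (f : G → ℝ) :
    mDeriv h (fun x => (f x : ℂ)) = fun x => ((f (x + h) * f x : ℝ) : ℂ) := by
  ext x
  simp [mDeriv]

section Gowers

variable {G : Type*} [AddCommGroup G] [Fintype G]

def cubeAvg (s : ℕ) (f : G → ℝ) : ℝ :=
  𝔼 x, 𝔼 h : Fin s → G, ∏ ω : Fin s → Bool, f (x + ∑ t, cubeVertex ω h t)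

theorem gowersAvg_ofReal (s : ℕ) (f : G → ℝ) :
    gowersAvg s (fun x => (f x : ℂ)) = cubeAvg s f := by
  induction s generalizing f with
  | zero => simp [gowersAvg, cavg_eq_expect, cubeAvg]
  | succ s ih =>
    rw [gowersAvg, cavg_eq_expect]
    simp_rw [mDeriv_ofReal, ih, ← Complex.ofReal_expect]
    congr 1
    simp_rw [cubeAvg, expect_pi_fin_succ, prod_pi_fin_succ, Fintype.prod_bool, cubeVertex_cons,
      Fin.sum_cons, if_true, Bool.false_eq_true, if_false, zero_add]
    rw [expect_comm]
    refine expect_congr rfl fun x _ => expect_congr rfl fun a _ => expect_congr rfl fun h _ => ?_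
    simp_rw [add_left_comm x a, add_comm a]
    exact prod_mul_distrib

theorem gowersNorm_ofReal (s : ℕ) (f : G → ℝ) :
    gowersNorm s (fun x => (f x : ℂ)) = |cubeAvg s f| ^ ((1 : ℝ) / 2 ^ s) := by
  rw [gowersNorm, gowersAvg_ofReal, Complex.norm_real, Real.norm_eq_abs]

theorem expect_cube_add_sum {s : ℕ} (f : G → ℝ) (c : G) :
    𝔼 y : Fin (s + 1) → G, 𝔼 h, ∏ ω : Fin (s + 1) → Bool, f (c + ∑ t, (y + cubeVertex ω h : Fin (s + 1) → G) t)
      = cubeAvg (s + 1) f := by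
  simp only [Pi.add_apply, sum_add_distrib, ← add_assoc]
  rw [cubeAvg, expect_comm (univ : Finset G), expect_comm]
  exact expect_congr rfl fun h _ =>
    expect_add_sum (fun z => ∏ ω : Fin (s + 1) → Bool, f (z + ∑ t, cubeVertex ω h t)) c

end Gowers

theorem sum_smul_add_sum_smul {R M : Type*} [CommSemiring R] [AddCommMonoid M] [Module R M]
    {ℓ s : ℕ} (L : Fin ℓ → R) (v : Fin s → Fin ℓ → R) (x : Fin ℓ → M) (y : Fin s → M) :
    ∑ r, L r • (x r + ∑ t, v t r • y t) = ∑ r, L r • x r + ∑ t, (L ⬝ᵥ v t) • y t := by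
  simp only [smul_add, sum_add_distrib, smul_sum, smul_smul, dotProduct, sum_smul]
  rw [sum_comm (s := univ)]

theorem exists_dotProduct_eq_one_of_notMem_span {K ι : Type*} [Field K] [Fintype ι]
    {S : Set (ι → K)} {w : ι → K} (hw : w ∉ Submodule.span K S) :
    ∃ v, w ⬝ᵥ v = 1 ∧ ∀ u ∈ S, u ⬝ᵥ v = 0 := by
  classical
  obtain ⟨φ, hφw, hφS⟩ := Submodule.exists_dual_map_eq_bot_of_notMem hw inferInstance
  have hφ : ∀ u, u ⬝ᵥ (dotProductEquiv K ι).symm φ = φ u := fun u => by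
    rw [dotProduct_comm, ← dotProductEquiv_apply_apply, LinearEquiv.apply_symm_apply]
  refine ⟨(φ w)⁻¹ • (dotProductEquiv K ι).symm φ, ?_, fun u hu => ?_⟩
  · rw [dotProduct_smul, hφ, smul_eq_mul, inv_mul_cancel₀ hφw]
  · have : φ u ∈ (Submodule.span K S).map φ := Submodule.mem_map_of_mem (Submodule.subset_span hu)
    rw [hφS, Submodule.mem_bot] at this
    rw [dotProduct_smul, hφ, this, smul_zero]

theorem abs_expect_prod_pow_le_cubeAvg {K : Type*} {M : Type u} [CommSemiring K] [AddCommGroup M]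
    [Module K M] [Fintype M] {m ℓ s : ℕ} (f : Fin m → M → ℝ) (hf : ∀ j z, |f j z| ≤ 1)
    (L : Fin m → Fin ℓ → K) {i : Fin m} (c : Fin m → Fin (s + 1)) (v : Fin (s + 1) → Fin ℓ → K)
    (hv_one : ∀ t, L i ⬝ᵥ v t = 1) (hv_zero : ∀ j, j ≠ i → L j ⬝ᵥ v (c j) = 0) :
    |𝔼 x : Fin ℓ → M, ∏ j, f j (∑ r, L j r • x r)| ^ 2 ^ (s + 1) ≤ |cubeAvg (s + 1) (f i)| := by
  set g : (Fin ℓ → M) → (Fin (s + 1) → M) → ℝ := fun x y => f i (∑ r, L i r • x r + ∑ t, y t)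
  set B : Fin (s + 1) → (Fin ℓ → M) → (Fin (s + 1) → M) → ℝ := fun t x y =>
    ∏ j ∈ univ.erase i with c j = t, f j (∑ r, L j r • x r + ∑ u, (L j ⬝ᵥ v u) • y u)
  have h_factor : ∀ x y, ∏ j, f j (∑ r, L j r • (x r + ∑ t, v t r • y t)) = g x y * ∏ t, B t x y :=
    fun x y => by
      simp_rw [sum_smul_add_sum_smul, B, prod_fiberwise, ← mul_prod_erase univ _ (mem_univ i),
        hv_one, one_smul]
      rfl
  have hB : ∀ t x y, |B t x y| ≤ 1 := fun t x y => by
    rw [abs_prod]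
    exact prod_le_one (fun _ _ => abs_nonneg _) fun j _ => hf j _
  have hB_update : ∀ t x y a, B t x (Function.update y t a) = B t x y := fun t x y a => by
    refine prod_congr rfl fun j hj => ?_
    obtain ⟨hji, rfl⟩ : j ≠ i ∧ c j = t := by simpa [and_comm] using hj
    congr 2
    refine sum_congr rfl fun u _ => ?_
    rcases eq_or_ne u (c j) with rfl | hu
    · rw [hv_zero j hji, zero_smul, zero_smul]
    · rw [Function.update_of_ne hu]
  have h_cube : 𝔼 x, 𝔼 y, 𝔼 h, ∏ ω : Fin (s + 1) → Bool, g x (y + cubeVertex ω h)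
      = cubeAvg (s + 1) (f i) := by
    simp only [g]
    rw [expect_congr rfl fun x _ => expect_cube_add_sum (f i) _, Fintype.expect_const]
  calc |𝔼 x : Fin ℓ → M, ∏ j, f j (∑ r, L j r • x r)| ^ 2 ^ (s + 1)
      = |𝔼 x, 𝔼 y, g x y * ∏ t, B t x y| ^ 2 ^ (s + 1) := by
        rw [expect_eq_expect_expect_add _ fun (y : Fin (s + 1) → M) r => ∑ t, v t r • y t]
        simp_rw [Pi.add_apply, h_factor]
    _ ≤ |𝔼 x, 𝔼 y, 𝔼 h, ∏ ω : Fin (s + 1) → Bool, g x (y + cubeVertex ω h)| :=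
        abs_expect_mul_prod_pow_le_cube g B hB hB_update
    _ = |cubeAvg (s + 1) (f i)| := by rw [h_cube]

theorem le_rpow_one_div_two_pow {x y : ℝ} (hx : 0 ≤ x) (hy : 0 ≤ y) {s : ℕ}
    (h : x ^ 2 ^ s ≤ y) : x ≤ y ^ ((1 : ℝ) / 2 ^ s) := by
  rw [one_div, Real.le_rpow_inv_iff_of_pos hx hy (by positivity)]
  exact_mod_cast h

/-- Counting lemma: for `f_1,…,f_m : F_p^n → [-1,1]` and a system of linear
forms of Cauchy–Schwarz complexity `d`,
`|E_{x_1,…,x_ℓ}[∏ f_i(L_i(x))]| ≤ min_i ‖f_i‖_{U^{d+1}}`. -/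
theorem counting_lemma (p : ℕ) [Fact p.Prime] (n m ℓ d : ℕ)
    (f : Fin m → (Fin n → ZMod p) → ℝ)
    (hf : ∀ i x, f i x ∈ Set.Icc (-1 : ℝ) 1)
    (L : Fin m → Fin ℓ → ZMod p)
    (hL : CSComplexityLE p d L) (i : Fin m) :
    |ravg (fun x : Fin ℓ → Fin n → ZMod p => ∏ j, f j (formApply (L j) x))|
      ≤ gowersNorm (d + 1) (fun y => ((f i y : ℝ) : ℂ)) := by
  obtain ⟨c, hc⟩ := hL i
  choose v hv_one hv_zero using fun t => exists_dotProduct_eq_one_of_notMem_span (hc t)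
  have h_pow := abs_expect_prod_pow_le_cubeAvg f (fun j z => abs_le.mpr (hf j z)) L c v hv_one
    fun j hj => hv_zero (c j) (L j) ⟨j, hj, rfl, rfl⟩
  rw [ravg_eq_expect, gowersNorm_ofReal]
  exact le_rpow_one_div_two_pow (abs_nonneg _) (abs_nonneg _) h_pow
end
end

section
/- Any set L = {L_1,...,L_m} of pairwise linearly independent linear forms (no form a scalar multiple of another) has Cauchy–Schwarz complexity at most m − 2. -/
open scoped BigOperators

noncomputable section

theorem Submodule.notMem_span_of_subsingleton {R M : Type*} [Semiring R] [AddCommMonoid M]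
    [Module R M] {x : M} {s : Set M} (hs : s.Subsingleton) (hx : x ≠ 0)
    (hmul : ∀ v ∈ s, ∀ c : R, x ≠ c • v) : x ∉ span R s := by
  obtain rfl | ⟨v, rfl⟩ := hs.eq_empty_or_singleton
  · simpa using hx
  · rw [mem_span_singleton]
    rintro ⟨c, hc⟩
    exact hmul v rfl c hc.symm

theorem Fin.exists_injOn_compl_singleton {m : ℕ} (i : Fin m) :
    ∃ c : Fin m → Fin (m - 2 + 1), Set.InjOn c {i}ᶜ := by
  have hcard : Fintype.card ↥({i}ᶜ : Set (Fin m)) ≤ Fintype.card (Fin (m - 2 + 1)) := by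
    rw [Fintype.card_compl_set, Set.card_singleton, Fintype.card_fin, Fintype.card_fin]
    omega
  obtain ⟨e⟩ := Function.Embedding.nonempty_of_card_le hcard
  exact Set.exists_injOn_iff_injective.mpr ⟨e, e.injective⟩

theorem csComplexityLE_of_injOn {p m d : ℕ} {ι : Type*} [Fintype ι] {L : Fin m → ι → ZMod p}
    (hne : ∀ i, L i ≠ 0) (hind : ∀ i j, i ≠ j → ∀ c : ZMod p, L i ≠ c • L j)
    (hsep : ∀ i, ∃ c : Fin m → Fin (d + 1), Set.InjOn c {i}ᶜ) : CSComplexityLE p d L := by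
  intro i
  obtain ⟨c, hc⟩ := hsep i
  refine ⟨c, fun t => Submodule.notMem_span_of_subsingleton ?_ (hne i) ?_⟩
  · rintro _ ⟨j, hj, hjt, rfl⟩ _ ⟨j', hj', hjt', rfl⟩
    rw [hc hj hj' (hjt.trans hjt'.symm)]
  · rintro _ ⟨j, hj, -, rfl⟩
    exact hind i j hj.symm

theorem complexity_le_of_pairwise_indep_general (p : ℕ) (k m : ℕ)
    (L : Fin m → Fin k → ZMod p)
    (hne : ∀ i, L i ≠ 0)
    (hind : ∀ i j, i ≠ j → ∀ c : ZMod p, L i ≠ c • L j) :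
    CSComplexityLE p (m - 2) L :=
  csComplexityLE_of_injOn hne hind Fin.exists_injOn_compl_singleton

/-- Any set of `m` pairwise linearly independent (nonzero, no one a scalar
multiple of another) linear forms has Cauchy–Schwarz complexity at most `m - 2`. -/
theorem complexity_le_of_pairwise_indep (p : ℕ) [Fact p.Prime] (k m : ℕ)
    (L : Fin m → Fin k → ZMod p)
    (hne : ∀ i, L i ≠ 0)
    (hind : ∀ i j, i ≠ j → ∀ c : ZMod p, L i ≠ c • L j) :
    CSComplexityLE p (m - 2) L :=
  complexity_le_of_pairwise_indep_general p k m L hne hind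

end
end
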